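/- Let μ and ν be finite positive Borel measures on ℝ with the same total mass, and suppose only that μ ≤ ρ₀·λ for a constant ρ₀ > 0, where λ is Lebesgue measure on ℝ (no upper density bound is assumed on ν). Then ‖ν − μ‖_{Ḣ⁻¹} ≤ 2 ρ₀^{1/2} · W₂(μ, ν). -/

import Mathlib

/-!
Let `G(u) = ν[u, ∞) - μ[u, ∞)`. For a coupling `π` of `μ` and `ν`,
`G(u) = ∫ (1{u ≤ y} - 1{u ≤ x}) dπ(x, y)`, so Fubini gives `∫ g G = ∫ (∫_x^y g) dπ(x, y)` for
every `g ∈ L²`. With `g = f'` this reads `∫ f dν - ∫ f dμ = ∫ f' G`, so by Cauchy–Schwarz it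
suffices to bound `‖G‖₂`. With `g = G` we use that `G - ρ₀ · id` is nonincreasing (the `ν`-part of
`G` is nonincreasing and `μ` has density at most `ρ₀`), whence
`∫_x^y G ≤ G(x)(y - x) + ρ₀ (y - x)² / 2 ≤ G(x)² / (2ρ₀) + ρ₀ (y - x)²`. Integrating against `π`
and using `∫ G² dμ ≤ ρ₀ ‖G‖₂²` gives `‖G‖₂² ≤ ‖G‖₂² / 2 + ρ₀ ∫ |x - y|² dπ`, i.e.
`‖G‖₂ ≤ √(2ρ₀) (∫ |x - y|² dπ)^{1/2}`; it remains to take the infimum over `π`.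
-/

open MeasureTheory ENNReal

/-- The homogeneous Sobolev norm `‖ν − μ‖_{Ḣ⁻¹(lam)}` on `ℝ` of the difference of two
finite positive Borel measures `μ, ν`, with respect to a base measure `lam`:
the supremum of `|∫ f dν − ∫ f dμ|` over bounded `C¹` functions `f : ℝ → ℝ` with
`∫ |f'|² dlam ≤ 1`. -/
noncomputable def HminusOneDiffReal (lam μ ν : Measure ℝ) : ℝ≥0∞ :=
  ⨆ f ∈ {f : ℝ → ℝ |
      (∃ C, ∀ x, |f x| ≤ C) ∧ ContDiff ℝ 1 f ∧
      ∫⁻ x, ENNReal.ofReal (|deriv f x| ^ 2) ∂lam ≤ 1},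
    ENNReal.ofReal |(∫ x, f x ∂ν) - ∫ x, f x ∂μ|

/-- The quadratic Wasserstein distance `W₂(μ,ν)` on `ℝ`, valued in `[0,∞]`. -/
noncomputable def W2Real (μ ν : Measure ℝ) : ℝ≥0∞ :=
  (⨅ π ∈ {π : Measure (ℝ × ℝ) | π.map Prod.fst = μ ∧ π.map Prod.snd = ν},
    ∫⁻ p, ENNReal.ofReal (|p.1 - p.2| ^ 2) ∂π) ^ (1/2 : ℝ)

open Set

theorem sq_integral_mul_le_integral_sq_mul_integral_sq {α : Type*} [MeasurableSpace α]
    {μ : Measure α} {f g : α → ℝ} (hf : MemLp f 2 μ) (hg : MemLp g 2 μ) :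
    (∫ x, f x * g x ∂μ) ^ 2 ≤ (∫ x, f x ^ 2 ∂μ) * ∫ x, g x ^ 2 ∂μ := by
  have inner_toLp : ∀ {a b : α → ℝ} (ha : MemLp a 2 μ) (hb : MemLp b 2 μ),
      inner ℝ (ha.toLp a) (hb.toLp b) = ∫ x, a x * b x ∂μ := by
    intro a b ha hb
    rw [L2.inner_def]
    refine integral_congr_ae ?_
    filter_upwards [ha.coeFn_toLp, hb.coeFn_toLp] with x hax hbx
    simp [hax, hbx, mul_comm]
  have h := real_inner_mul_inner_self_le (hf.toLp f) (hg.toLp g)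
  simpa only [inner_toLp, ← sq] using h

theorem memLp_two_of_lintegral_sq_ne_top {α : Type*} [MeasurableSpace α] {μ : Measure α}
    {g : α → ℝ} (hg : AEStronglyMeasurable g μ) (h : ∫⁻ x, ENNReal.ofReal (g x ^ 2) ∂μ ≠ ⊤) :
    MemLp g 2 μ :=
  (memLp_two_iff_integrable_sq hg).2
    ⟨hg.pow 2, (hasFiniteIntegral_iff_ofReal (.of_forall fun _ ↦ sq_nonneg _)).2 h.lt_top⟩

theorem integral_le_mul_integral_of_le_smul {α : Type*} [MeasurableSpace α] {μ ν : Measure α}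
    {c : ℝ} (hc : 0 ≤ c) (hμ : μ ≤ ENNReal.ofReal c • ν) {f : α → ℝ} (hf₀ : 0 ≤ f)
    (hf : Integrable f ν) : ∫ x, f x ∂μ ≤ c * ∫ x, f x ∂ν :=
  calc ∫ x, f x ∂μ ≤ ∫ x, f x ∂(ENNReal.ofReal c • ν) :=
        integral_mono_measure hμ (.of_forall hf₀) (hf.smul_measure ofReal_ne_top)
    _ = c * ∫ x, f x ∂ν := by rw [integral_smul_measure, toReal_ofReal hc, smul_eq_mul]

theorem MeasureTheory.MemLp.intervalIntegrable {p : ℝ≥0∞} (hp : 1 ≤ p) {g : ℝ → ℝ}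
    (hg : MemLp g p) (a b : ℝ) : IntervalIntegrable g volume a b :=
  ((hg.locallyIntegrable hp).integrableOn_isCompact isCompact_uIcc).intervalIntegrable

theorem Antitone.intervalIntegral_le_mul_sub {h : ℝ → ℝ} (hh : Antitone h) (x y : ℝ) :
    ∫ u in x..y, h u ≤ h x * (y - x) := by
  rcases le_total x y with hxy | hyx
  · calc ∫ u in x..y, h u ≤ ∫ _ in x..y, h x :=
          intervalIntegral.integral_mono_on hxy hh.intervalIntegrable intervalIntegrable_const
            fun u hu ↦ hh hu.1
      _ = h x * (y - x) := by simp [mul_comm]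
  · rw [intervalIntegral.integral_symm, neg_le, ← mul_neg, neg_sub]
    calc h x * (x - y) = ∫ _ in y..x, h x := by simp [mul_comm]
      _ ≤ ∫ u in y..x, h u :=
          intervalIntegral.integral_mono_on hyx intervalIntegrable_const hh.intervalIntegrable
            fun u hu ↦ hh hu.2

noncomputable def tailGap (μ ν : Measure ℝ) (x : ℝ) : ℝ :=
  ν.real (Ici x) - μ.real (Ici x)

theorem monotone_measureReal_Ici_add_mul {μ : Measure ℝ} [IsFiniteMeasure μ] {ρ : ℝ}
    (hρ : 0 ≤ ρ) (hμ : μ ≤ ENNReal.ofReal ρ • volume) :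
    Monotone fun x ↦ μ.real (Ici x) + ρ * x := by
  intro a b hab
  have hIco : μ.real (Ico a b) ≤ ρ * (b - a) := by
    have h := hμ (Ico a b)
    rw [Measure.smul_apply, Real.volume_Ico, smul_eq_mul, ← ENNReal.ofReal_mul hρ] at h
    exact ENNReal.toReal_le_of_le_ofReal (mul_nonneg hρ (sub_nonneg.2 hab)) h
  have hsplit : μ.real (Ici a) = μ.real (Ico a b) + μ.real (Ici b) := by
    rw [← Ico_union_Ici_eq_Ici hab, measureReal_union
      ((Iio_disjoint_Ici le_rfl).mono_left Ico_subset_Iio_self) measurableSet_Ici]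
  dsimp only
  linarith

theorem antitone_tailGap_sub_mul {μ ν : Measure ℝ} [IsFiniteMeasure μ] [IsFiniteMeasure ν]
    {ρ : ℝ} (hρ : 0 ≤ ρ) (hμ : μ ≤ ENNReal.ofReal ρ • volume) :
    Antitone fun x ↦ tailGap μ ν x - ρ * x := by
  intro a b hab
  have hν : ν.real (Ici b) ≤ ν.real (Ici a) := measureReal_mono (Ici_subset_Ici.2 hab)
  have hμ' := monotone_measureReal_Ici_add_mul hρ hμ hab
  simp only [tailGap] at hμ' ⊢
  linarith

theorem intervalIntegral_tailGap_le {μ ν : Measure ℝ} [IsFiniteMeasure μ] [IsFiniteMeasure ν]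
    {ρ : ℝ} (hρ : 0 ≤ ρ) (hμ : μ ≤ ENNReal.ofReal ρ • volume) (x y : ℝ) :
    ∫ u in x..y, tailGap μ ν u ≤ tailGap μ ν x * (y - x) + ρ / 2 * (y - x) ^ 2 := by
  have hH := antitone_tailGap_sub_mul (ν := ν) hρ hμ
  have hsplit : ∫ u in x..y, tailGap μ ν u =
      (∫ u in x..y, (tailGap μ ν u - ρ * u)) + ρ * ∫ u in x..y, u := by
    rw [← intervalIntegral.integral_const_mul, ← intervalIntegral.integral_add
      hH.intervalIntegrable ((continuous_const_mul ρ).intervalIntegrable _ _)]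
    simp
  rw [hsplit, integral_id]
  linarith [hH.intervalIntegral_le_mul_sub x y]

noncomputable def transportKernel (p : ℝ × ℝ) (u : ℝ) : ℝ :=
  (Ioc p.1 p.2).indicator 1 u - (Ioc p.2 p.1).indicator 1 u

theorem transportKernel_eq (p : ℝ × ℝ) (u : ℝ) :
    transportKernel p u =
      {q : ℝ × ℝ | u ≤ q.2}.indicator 1 p - {q : ℝ × ℝ | u ≤ q.1}.indicator 1 p := by
  by_cases h1 : u ≤ p.1 <;> by_cases h2 : u ≤ p.2 <;>
    simp [transportKernel, indicator_apply, h1, h2]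

theorem abs_transportKernel (p : ℝ × ℝ) (u : ℝ) :
    |transportKernel p u| = (uIoc p.1 p.2).indicator 1 u := by
  have h01 (s : Set ℝ) : 0 ≤ s.indicator (1 : ℝ → ℝ) u :=
    indicator_nonneg (fun _ _ ↦ zero_le_one) u
  rcases le_total p.1 p.2 with h | h
  · simp [transportKernel, uIoc_of_le h, Ioc_eq_empty_of_le h, h01]
  · simp [transportKernel, uIoc_of_ge h, Ioc_eq_empty_of_le h, h01]

theorem abs_transportKernel_le_one (p : ℝ × ℝ) (u : ℝ) : |transportKernel p u| ≤ 1 := by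
  rw [abs_transportKernel]
  exact indicator_le_self' (fun _ _ ↦ zero_le_one) u

theorem measurable_transportKernel : Measurable (Function.uncurry transportKernel) := by
  have h (a b : ℝ × ℝ → ℝ) (ha : Measurable a) (hb : Measurable b) :
      Measurable fun q : (ℝ × ℝ) × ℝ ↦ (Ioc (a q.1) (b q.1)).indicator (1 : ℝ → ℝ) q.2 := by
    have hs : MeasurableSet {q : (ℝ × ℝ) × ℝ | q.2 ∈ Ioc (a q.1) (b q.1)} :=
      (measurableSet_lt (ha.comp measurable_fst) measurable_snd).inter
        (measurableSet_le measurable_snd (hb.comp measurable_fst))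
    convert (measurable_const (a := (1 : ℝ))).indicator hs using 1
    ext q; simp [indicator_apply]
  exact (h _ _ measurable_fst measurable_snd).sub (h _ _ measurable_snd measurable_fst)

theorem integrable_transportKernel (p : ℝ × ℝ) : Integrable (transportKernel p) := by
  have h (a b : ℝ) : Integrable ((Ioc a b).indicator (1 : ℝ → ℝ)) :=
    (integrable_indicator_iff measurableSet_Ioc).2 (integrableOn_const measure_Ioc_lt_top.ne)
  exact (h _ _).sub (h _ _)

theorem integral_abs_transportKernel (p : ℝ × ℝ) :
    ∫ u, |transportKernel p u| = |p.2 - p.1| := by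
  simp only [abs_transportKernel]
  rw [integral_indicator_one measurableSet_uIoc, measureReal_def, Real.volume_uIoc,
    toReal_ofReal (abs_nonneg _)]

theorem integral_mul_transportKernel {g : ℝ → ℝ} {p : ℝ × ℝ}
    (hg : IntervalIntegrable g volume p.1 p.2) :
    ∫ u, g u * transportKernel p u = ∫ u in p.1..p.2, g u := by
  have hsplit : (fun u ↦ g u * transportKernel p u) =
      fun u ↦ (Ioc p.1 p.2).indicator g u - (Ioc p.2 p.1).indicator g u := by
    ext u; simp only [transportKernel, indicator_apply, Pi.one_apply]; split_ifs <;> ring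
  rw [hsplit, integral_sub ((integrable_indicator_iff measurableSet_Ioc).2 hg.1)
    ((integrable_indicator_iff measurableSet_Ioc).2 hg.2),
    integral_indicator measurableSet_Ioc, integral_indicator measurableSet_Ioc]
  rfl

theorem integrable_uncurry_transportKernel {π : Measure (ℝ × ℝ)}
    (h : Integrable (fun p : ℝ × ℝ ↦ p.2 - p.1) π) :
    Integrable (Function.uncurry transportKernel) (π.prod volume) := by
  rw [integrable_prod_iff measurable_transportKernel.aestronglyMeasurable]
  refine ⟨.of_forall integrable_transportKernel, ?_⟩
  simpa only [Function.uncurry_apply_pair, Real.norm_eq_abs, integral_abs_transportKernel]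
    using h.abs

section Coupling

variable {π : Measure (ℝ × ℝ)} [IsFiniteMeasure π]

theorem integral_transportKernel (u : ℝ) :
    ∫ p, transportKernel p u ∂π = tailGap (π.map Prod.fst) (π.map Prod.snd) u := by
  have hs₁ : MeasurableSet {q : ℝ × ℝ | u ≤ q.1} := measurableSet_le measurable_const measurable_fst
  have hs₂ : MeasurableSet {q : ℝ × ℝ | u ≤ q.2} := measurableSet_le measurable_const measurable_snd
  simp_rw [transportKernel_eq]
  rw [integral_sub ((integrable_const 1).indicator hs₂) ((integrable_const 1).indicator hs₁),
    integral_indicator_one hs₂, integral_indicator_one hs₁, tailGap,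
    map_measureReal_apply measurable_fst measurableSet_Ici,
    map_measureReal_apply measurable_snd measurableSet_Ici]
  rfl

theorem abs_tailGap_le (u : ℝ) : |tailGap (π.map Prod.fst) (π.map Prod.snd) u| ≤ π.real univ := by
  rw [← integral_transportKernel, ← Real.norm_eq_abs, ← one_mul (π.real univ)]
  exact norm_integral_le_of_norm_le_const (.of_forall fun p ↦ abs_transportKernel_le_one p u)

variable (hπ : MemLp (fun p : ℝ × ℝ ↦ p.2 - p.1) 2 π)
include hπ

theorem memLp_tailGap : MemLp (tailGap (π.map Prod.fst) (π.map Prod.snd)) 2 := by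
  have hG : Integrable (tailGap (π.map Prod.fst) (π.map Prod.snd)) := by
    simpa only [Function.uncurry_apply_pair, integral_transportKernel]
      using (integrable_uncurry_transportKernel (hπ.integrable one_le_two)).integral_prod_right
  refine (memLp_two_iff_integrable_sq hG.1).2 <|
    (hG.norm.const_mul (π.real univ)).mono' (hG.1.pow 2) (.of_forall fun u ↦ ?_)
  rw [Real.norm_eq_abs, abs_pow, sq, Real.norm_eq_abs]
  exact mul_le_mul_of_nonneg_right (abs_tailGap_le u) (abs_nonneg _)

theorem integrable_mul_transportKernel {g : ℝ → ℝ} (hg : MemLp g 2) :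
    Integrable (fun q : (ℝ × ℝ) × ℝ ↦ g q.2 * transportKernel q.1 q.2) (π.prod volume) := by
  have hk := integrable_uncurry_transportKernel (hπ.integrable one_le_two)
  refine ((hg.integrable_sq.comp_snd π).add hk.abs).mono'
    ((hg.1.comp_snd).mul measurable_transportKernel.aestronglyMeasurable) (.of_forall fun q ↦ ?_)
  have hk1 := abs_transportKernel_le_one q.1 q.2
  simp only [Real.norm_eq_abs, abs_mul, Pi.add_apply, Function.uncurry_def]
  nlinarith [abs_nonneg (transportKernel q.1 q.2), sq_abs (g q.2),
    sq_nonneg (|g q.2| - |transportKernel q.1 q.2| / 2)]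

theorem integral_mul_tailGap {g : ℝ → ℝ} (hg : MemLp g 2) :
    ∫ u, g u * tailGap (π.map Prod.fst) (π.map Prod.snd) u = ∫ p, (∫ u in p.1..p.2, g u) ∂π :=
  calc ∫ u, g u * tailGap (π.map Prod.fst) (π.map Prod.snd) u
      = ∫ u, ∫ p, g u * transportKernel p u ∂π := by
        simp_rw [integral_const_mul, integral_transportKernel]
    _ = ∫ p, (∫ u, g u * transportKernel p u) ∂π :=
        (integral_integral_swap (integrable_mul_transportKernel hπ hg)).symm
    _ = ∫ p, (∫ u in p.1..p.2, g u) ∂π := by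
        simp_rw [integral_mul_transportKernel (hg.intervalIntegrable one_le_two _ _)]

theorem integrable_intervalIntegral_fst_snd {g : ℝ → ℝ} (hg : MemLp g 2) :
    Integrable (fun p : ℝ × ℝ ↦ ∫ u in p.1..p.2, g u) π := by
  simpa only [integral_mul_transportKernel (hg.intervalIntegrable one_le_two _ _)]
    using (integrable_mul_transportKernel hπ hg).integral_prod_left

theorem integral_tailGap_sq_le {ρ : ℝ} (hρ : 0 < ρ)
    (hμ : π.map Prod.fst ≤ ENNReal.ofReal ρ • volume) :
    ∫ u, tailGap (π.map Prod.fst) (π.map Prod.snd) u ^ 2 ≤ 2 * ρ * ∫ p, (p.2 - p.1) ^ 2 ∂π := by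
  set G := tailGap (π.map Prod.fst) (π.map Prod.snd)
  have hG := memLp_tailGap hπ
  have hGμ : ∫ x, G x ^ 2 ∂(π.map Prod.fst) ≤ ρ * ∫ u, G u ^ 2 :=
    integral_le_mul_integral_of_le_smul hρ.le hμ (fun _ ↦ sq_nonneg _) hG.integrable_sq
  have hpt (p : ℝ × ℝ) : ∫ u in p.1..p.2, G u ≤ G p.1 ^ 2 / (2 * ρ) + ρ * (p.2 - p.1) ^ 2 := by
    have hamgm : G p.1 * (p.2 - p.1) ≤ G p.1 ^ 2 / (2 * ρ) + ρ / 2 * (p.2 - p.1) ^ 2 := by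
      rw [div_add' _ _ _ (by positivity), le_div_iff₀ (by positivity)]
      nlinarith [sq_nonneg (G p.1 - ρ * (p.2 - p.1))]
    linarith [intervalIntegral_tailGap_le (ν := π.map Prod.snd) hρ.le hμ p.1 p.2]
  have hGμ2 : Integrable (fun x ↦ G x ^ 2) (π.map Prod.fst) :=
    (hG.integrable_sq.smul_measure ofReal_ne_top).mono_measure hμ
  have hfst : Integrable (fun p : ℝ × ℝ ↦ G p.1 ^ 2 / (2 * ρ)) π :=
    (hGμ2.comp_measurable measurable_fst).div_const _
  have hsq : Integrable (fun p : ℝ × ℝ ↦ ρ * (p.2 - p.1) ^ 2) π := hπ.integrable_sq.const_mul ρ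
  have hbound : ∫ u, G u ^ 2 ≤
      (∫ x, G x ^ 2 ∂(π.map Prod.fst)) / (2 * ρ) + ρ * ∫ p, (p.2 - p.1) ^ 2 ∂π :=
    calc ∫ u, G u ^ 2 = ∫ p, (∫ u in p.1..p.2, G u) ∂π := by
          simpa only [sq] using integral_mul_tailGap hπ hG
      _ ≤ ∫ p, (G p.1 ^ 2 / (2 * ρ) + ρ * (p.2 - p.1) ^ 2) ∂π :=
          integral_mono (integrable_intervalIntegral_fst_snd hπ hG) (hfst.add hsq) hpt
      _ = _ := by
          rw [integral_add hfst hsq, integral_div, integral_const_mul,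
            integral_map measurable_fst.aemeasurable hGμ2.1]
  have hhalf : (∫ x, G x ^ 2 ∂(π.map Prod.fst)) / (2 * ρ) ≤ (∫ u, G u ^ 2) / 2 := by
    rw [div_le_iff₀ (by positivity)]
    linarith
  linarith

theorem sq_integral_sub_integral_le {ρ : ℝ} (hρ : 0 < ρ)
    (hμ : π.map Prod.fst ≤ ENNReal.ofReal ρ • volume) {f : ℝ → ℝ} (hf : ContDiff ℝ 1 f)
    (hf' : MemLp (deriv f) 2) (hfμ : Integrable f (π.map Prod.fst))
    (hfν : Integrable f (π.map Prod.snd)) :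
    (∫ x, f x ∂(π.map Prod.snd) - ∫ x, f x ∂(π.map Prod.fst)) ^ 2 ≤
      2 * ρ * (∫ u, deriv f u ^ 2) * ∫ p, (p.2 - p.1) ^ 2 ∂π := by
  have hΔ : ∫ x, f x ∂(π.map Prod.snd) - ∫ x, f x ∂(π.map Prod.fst) =
      ∫ u, deriv f u * tailGap (π.map Prod.fst) (π.map Prod.snd) u := by
    have hfν' : Integrable (fun p : ℝ × ℝ ↦ f p.2) π := hfν.comp_measurable measurable_snd
    have hfμ' : Integrable (fun p : ℝ × ℝ ↦ f p.1) π := hfμ.comp_measurable measurable_fst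
    rw [integral_mul_tailGap hπ hf', integral_map measurable_snd.aemeasurable hfν.1,
      integral_map measurable_fst.aemeasurable hfμ.1, ← integral_sub hfν' hfμ']
    refine integral_congr_ae (.of_forall fun p ↦ ?_)
    exact (intervalIntegral.integral_deriv_eq_sub (fun x _ ↦ hf.differentiable one_ne_zero x)
      (hf'.intervalIntegrable one_le_two _ _)).symm
  rw [hΔ, mul_assoc, mul_left_comm]
  calc _ ≤ (∫ u, deriv f u ^ 2) * ∫ u, tailGap (π.map Prod.fst) (π.map Prod.snd) u ^ 2 :=
        sq_integral_mul_le_integral_sq_mul_integral_sq hf' (memLp_tailGap hπ)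
    _ ≤ _ := mul_le_mul_of_nonneg_left (integral_tailGap_sq_le hπ hρ hμ)
        (integral_nonneg fun _ ↦ sq_nonneg _)

end Coupling

theorem ofReal_abs_integral_sub_integral_le {π : Measure (ℝ × ℝ)} [IsFiniteMeasure π]
    {ρ : ℝ} (hρ : 0 < ρ) (hμ : π.map Prod.fst ≤ ENNReal.ofReal ρ • volume) {f : ℝ → ℝ}
    (hfb : ∃ C, ∀ x, |f x| ≤ C) (hf : ContDiff ℝ 1 f)
    (hf' : ∫⁻ x, ENNReal.ofReal (|deriv f x| ^ 2) ≤ 1) :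
    ENNReal.ofReal |∫ x, f x ∂(π.map Prod.snd) - ∫ x, f x ∂(π.map Prod.fst)| ≤
      ENNReal.ofReal (2 * Real.sqrt ρ) *
        (∫⁻ p, ENNReal.ofReal (|p.1 - p.2| ^ 2) ∂π) ^ (1 / 2 : ℝ) := by
  have hcost : ∫⁻ p, ENNReal.ofReal (|p.1 - p.2| ^ 2) ∂π =
      ∫⁻ p, ENNReal.ofReal ((p.2 - p.1) ^ 2) ∂π :=
    lintegral_congr fun p ↦ by rw [abs_sub_comm, sq_abs]
  rw [hcost]
  by_cases hfin : ∫⁻ p, ENNReal.ofReal ((p.2 - p.1) ^ 2) ∂π = ⊤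
  · rw [hfin, top_rpow_of_pos (by norm_num), mul_top (by positivity)]
    exact le_top
  obtain ⟨C, hC⟩ := hfb
  have hint (m : Measure ℝ) [IsFiniteMeasure m] : Integrable f m :=
    .of_bound hf.continuous.aestronglyMeasurable C (.of_forall hC)
  have hπ : MemLp (fun p : ℝ × ℝ ↦ p.2 - p.1) 2 π :=
    memLp_two_of_lintegral_sq_ne_top (by fun_prop) hfin
  simp_rw [sq_abs] at hf'
  have hf'2 : MemLp (deriv f) 2 :=
    memLp_two_of_lintegral_sq_ne_top (hf.continuous_deriv le_rfl).aestronglyMeasurable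
      (ne_top_of_le_ne_top one_ne_top hf')
  have hf'1 : ∫ u, deriv f u ^ 2 ≤ 1 := by
    rw [← ofReal_le_one, ofReal_integral_eq_lintegral_ofReal hf'2.integrable_sq
      (.of_forall fun _ ↦ sq_nonneg _)]
    exact hf'
  rw [← ofReal_integral_eq_lintegral_ofReal hπ.integrable_sq (.of_forall fun _ ↦ sq_nonneg _),
    ofReal_rpow_of_nonneg (integral_nonneg fun _ ↦ sq_nonneg _) (by norm_num),
    ← ofReal_mul (by positivity), ← Real.sqrt_eq_rpow]
  refine ofReal_le_ofReal (abs_le_of_sq_le_sq ?_ (by positivity))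
  have hsq := sq_integral_sub_integral_le hπ hρ hμ hf hf'2 (hint _) (hint _)
  have hC2 : 0 ≤ ∫ p, (p.2 - p.1) ^ 2 ∂π := integral_nonneg fun _ ↦ sq_nonneg _
  rw [mul_pow, mul_pow, Real.sq_sqrt hρ.le, Real.sq_sqrt hC2]
  nlinarith [mul_le_mul_of_nonneg_left hf'1 (mul_nonneg hρ.le hC2)]

theorem HminusOne_le_W2_dimension_one_general (μ ν : Measure ℝ)
    [IsFiniteMeasure μ] (ρ₀ : ℝ) (hρ₀ : 0 < ρ₀) (hμ : μ ≤ ENNReal.ofReal ρ₀ • volume) :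
    HminusOneDiffReal volume μ ν ≤ ENNReal.ofReal (2 * Real.sqrt ρ₀) * W2Real μ ν := by
  have hc : ENNReal.ofReal (2 * Real.sqrt ρ₀) ≠ 0 := by positivity
  rw [W2Real, ← orderIsoRpow_apply _ (by norm_num : (0 : ℝ) < 1 / 2)]
  simp only [OrderIso.map_iInf, mul_iInf_of_ne hc ofReal_ne_top, orderIsoRpow_apply]
  refine iSup₂_le fun f ⟨hfb, hf, hf'⟩ ↦ le_iInf₂ fun π ⟨hπ₁, hπ₂⟩ ↦ ?_
  subst hπ₁ hπ₂
  have := Measure.isFiniteMeasure_of_map measurable_fst.aemeasurable (μ := π)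
  exact ofReal_abs_integral_sub_integral_le hρ₀ hμ hfb hf hf'

/-- On `ℝ`, if `μ ≤ ρ₀·λ` with `ρ₀ > 0` (no upper density bound on `ν`), and `μ, ν` are
finite measures with the same total mass, then `‖ν − μ‖_{Ḣ⁻¹} ≤ 2√ρ₀ · W₂(μ, ν)`. -/
theorem HminusOne_le_W2_dimension_one (μ ν : Measure ℝ)
    [IsFiniteMeasure μ] [IsFiniteMeasure ν] (hmass : μ Set.univ = ν Set.univ)
    (ρ₀ : ℝ) (hρ₀ : 0 < ρ₀) (hμ : μ ≤ ENNReal.ofReal ρ₀ • volume) :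
    HminusOneDiffReal volume μ ν ≤ ENNReal.ofReal (2 * Real.sqrt ρ₀) * W2Real μ ν :=
  HminusOne_le_W2_dimension_one_general μ ν ρ₀ hρ₀ hμ
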